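/- Let R be a reduced simply laced extended affine root system of rank > 1. Then every reflectable base P of R is S-minimal: no proper subset Q ⊊ P satisfies W_Q = W. -/

import Mathlib

open Pointwise
open scoped Classical

noncomputable section

namespace EARSPaper

variable {V : Type*} [AddCommGroup V] [Module ℝ V]

/-- The reflection based on `a`: `x ↦ x - (2 B(x,a)/B(a,a)) • a`.
By the division-by-zero convention this is the identity map when `B a a = 0`. -/
def reflMap (B : LinearMap.BilinForm ℝ V) (a : V) : V →ₗ[ℝ] V :=
  LinearMap.id - ((2 / B a a) • B.flip a).smulRight a

theorem reflMap_apply (B : LinearMap.BilinForm ℝ V) (a x : V) :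
    reflMap B a x = x - (2 / B a a * B x a) • a := by
  simp [reflMap, LinearMap.smulRight_apply, LinearMap.smul_apply, smul_eq_mul]

theorem reflMap_invol (B : LinearMap.BilinForm ℝ V) (a x : V) :
    reflMap B a (reflMap B a x) = x := by
  rcases eq_or_ne (B a a) 0 with h | h
  · simp [reflMap_apply, h]
  · rw [reflMap_apply, reflMap_apply]
    rw [map_sub, map_smul, LinearMap.sub_apply, LinearMap.smul_apply, smul_eq_mul]
    have hs : 2 / B a a * (B x a - 2 / B a a * B x a * B a a) = -(2 / B a a * B x a) := by
      field_simp
      ring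
    rw [hs, neg_smul, sub_neg_eq_add, sub_add_cancel]

/-- The reflection based on `a` as a linear automorphism of `V`. -/
def reflEquiv (B : LinearMap.BilinForm ℝ V) (a : V) : V ≃ₗ[ℝ] V :=
  LinearEquiv.ofLinear (reflMap B a) (reflMap B a)
    (LinearMap.ext fun x => reflMap_invol B a x)
    (LinearMap.ext fun x => reflMap_invol B a x)

@[simp] theorem reflEquiv_apply (B : LinearMap.BilinForm ℝ V) (a x : V) :
    reflEquiv B a x = reflMap B a x := rfl

/-- The set of nonisotropic elements of `R`. -/
def nonIso (B : LinearMap.BilinForm ℝ V) (R : Set V) : Set V := {a ∈ R | B a a ≠ 0}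

/-- Connectedness of a set with respect to the form. -/
def IsConnSet (B : LinearMap.BilinForm ℝ V) (P : Set V) : Prop :=
  ¬ ∃ P₁ P₂ : Set V, P₁.Nonempty ∧ P₂.Nonempty ∧ P₁ ∪ P₂ = P ∧ P₁ ∩ P₂ = ∅ ∧
      ∀ a ∈ P₁, ∀ b ∈ P₂, B a b = 0

/-- Extended affine root system (axioms (R1)-(R6), for a positive semidefinite
symmetric bilinear form). -/
structure IsEARS (B : LinearMap.BilinForm ℝ V) (R : Set V) : Prop where
  symm : ∀ x y : V, B x y = B y x
  posSemidef : ∀ x : V, 0 ≤ B x x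
  lattice : ∃ s : Set V, LinearIndependent ℝ ((↑) : s → V) ∧
      Submodule.span ℝ s = ⊤ ∧ AddSubgroup.closure R = AddSubgroup.closure s
  integrality : ∀ a ∈ nonIso B R, ∀ b ∈ nonIso B R, ∃ n : ℤ, 2 * B b a / B a a = (n : ℝ)
  reflInvariant : ∀ a ∈ nonIso B R, ∀ b ∈ R, reflMap B a b ∈ R
  isoEq : R ∩ (LinearMap.ker B : Set V) =
      (LinearMap.ker B : Set V) ∩ (nonIso B R - nonIso B R)
  notTwice : ∀ a ∈ nonIso B R, (2 : ℝ) • a ∉ R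
  conn : IsConnSet B (nonIso B R)

/-- `R` is reduced: no `α, β ∈ R^×` with `α - 2β ∈ V⁰`. -/
def IsReduced (B : LinearMap.BilinForm ℝ V) (R : Set V) : Prop :=
  ¬ ∃ a ∈ nonIso B R, ∃ b ∈ nonIso B R, a - (2 : ℝ) • b ∈ LinearMap.ker B

/-- `R` is simply laced: the form takes a single value on `R^×`. -/
def IsSimplyLaced (B : LinearMap.BilinForm ℝ V) (R : Set V) : Prop :=
  ∀ a ∈ nonIso B R, ∀ b ∈ nonIso B R, B a a = B b b

/-- The nullity: the dimension of the radical of the form. -/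
def nullity (B : LinearMap.BilinForm ℝ V) : ℕ := Module.finrank ℝ ↥(LinearMap.ker B)

/-- The rank: `dim V - nullity`. -/
def rank (B : LinearMap.BilinForm ℝ V) : ℕ := Module.finrank ℝ V - nullity B

/-- The group generated by the reflections `w_a`, `a ∈ P`, acting on `V`. -/
def weylOn (B : LinearMap.BilinForm ℝ V) (P : Set V) : Subgroup (V ≃ₗ[ℝ] V) :=
  Subgroup.closure (reflEquiv B '' P)

/-- The set `W_P ⬝ P = {w a : w ∈ W_P, a ∈ P}`. -/
def reflOrbit (B : LinearMap.BilinForm ℝ V) (P : Set V) : Set V :=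
  {x | ∃ w ∈ weylOn B P, ∃ a ∈ P, w a = x}

/-- `P` is a reflectable set for `R`: `P ⊆ R^×` and `W_P ⬝ P = R^×`. -/
def IsReflSet (B : LinearMap.BilinForm ℝ V) (R P : Set V) : Prop :=
  P ⊆ nonIso B R ∧ reflOrbit B P = nonIso B R

/-- `P` is a reflectable base for `R`. -/
def IsReflBase (B : LinearMap.BilinForm ℝ V) (R P : Set V) : Prop :=
  IsReflSet B R P ∧ ∀ Q ⊆ P, Q ≠ P → ¬ IsReflSet B R Q

/-- The space `Ṽ = V ⊕ (V⁰)*`. -/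
abbrev VT (B : LinearMap.BilinForm ℝ V) : Type _ := V × Module.Dual ℝ ↥(LinearMap.ker B)

/-- The projection of `V` onto the radical `V⁰` along the fixed complement `V̇`. -/
def projRad (B : LinearMap.BilinForm ℝ V) (Vdot : Submodule ℝ V)
    (hc : IsCompl (LinearMap.ker B) Vdot) : V →ₗ[ℝ] ↥(LinearMap.ker B) :=
  (LinearMap.ker B).linearProjOfIsCompl Vdot hc

/-- The extension of the form `B` to a nondegenerate symmetric bilinear form on
`Ṽ = V ⊕ (V⁰)*`. -/
def formT (B : LinearMap.BilinForm ℝ V) (Vdot : Submodule ℝ V)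
    (hc : IsCompl (LinearMap.ker B) Vdot) : LinearMap.BilinForm ℝ (VT B) :=
  LinearMap.mk₂ ℝ
    (fun x y => B x.1 y.1 + y.2 (projRad B Vdot hc x.1) + x.2 (projRad B Vdot hc y.1))
    (fun x x' y => by
      simp only [Prod.fst_add, Prod.snd_add, map_add, LinearMap.add_apply]; ring)
    (fun c x y => by
      simp only [Prod.smul_fst, Prod.smul_snd, map_smul, LinearMap.smul_apply,
        smul_eq_mul]; ring)
    (fun x y y' => by
      simp only [Prod.fst_add, Prod.snd_add, map_add, LinearMap.add_apply]; ring)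
    (fun c x y => by
      simp only [Prod.smul_fst, Prod.smul_snd, map_smul, LinearMap.smul_apply,
        smul_eq_mul]; ring)

/-- The subgroup of `GL(Ṽ)` generated by the reflections based on `(a, 0)`, `a ∈ P`.
For `P = R^×` this is the extended affine Weyl group `W` of `R`. -/
def weylTilde (B : LinearMap.BilinForm ℝ V) (Vdot : Submodule ℝ V)
    (hc : IsCompl (LinearMap.ker B) Vdot) (P : Set V) :
    Subgroup ((VT B) ≃ₗ[ℝ] (VT B)) :=
  Subgroup.closure ((fun a => reflEquiv (formT B Vdot hc) (a, 0)) '' P)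

theorem reflT_mem_weylTilde (B : LinearMap.BilinForm ℝ V) (Vdot : Submodule ℝ V)
    (hc : IsCompl (LinearMap.ker B) Vdot) {P : Set V} {a : V} (ha : a ∈ P) :
    reflEquiv (formT B Vdot hc) (a, 0) ∈ weylTilde B Vdot hc P :=
  Subgroup.subset_closure ⟨a, ha, rfl⟩

/-- The orbit of `a ∈ V ⊆ Ṽ` under the group generated by the reflections based
on the elements of `G`. -/
def orbitT (B : LinearMap.BilinForm ℝ V) (Vdot : Submodule ℝ V)
    (hc : IsCompl (LinearMap.ker B) Vdot) (G : Set V) (a : V) : Set V :=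
  {x | ∃ w ∈ weylTilde B Vdot hc G, w (a, 0) = (x, 0)}

/-- The set `W_G ⬝ P` computed inside `Ṽ`. -/
def dotSetT (B : LinearMap.BilinForm ℝ V) (Vdot : Submodule ℝ V)
    (hc : IsCompl (LinearMap.ker B) Vdot) (G P : Set V) : Set V :=
  {x | ∃ w ∈ weylTilde B Vdot hc G, ∃ a ∈ P, w (a, 0) = (x, 0)}

/-- `R` is a minimal extended affine root system: for every `α ∈ R^×`,
`W_{R^× ∖ Wα}` is a proper subgroup of `W`. -/
def IsMinimalEARS (B : LinearMap.BilinForm ℝ V) (Vdot : Submodule ℝ V)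
    (hc : IsCompl (LinearMap.ker B) Vdot) (R : Set V) : Prop :=
  ∀ a ∈ nonIso B R,
    weylTilde B Vdot hc (nonIso B R \ orbitT B Vdot hc (nonIso B R) a)
      < weylTilde B Vdot hc (nonIso B R)

/-- The defining relators of the conjugation presented group `Ŵ`:
`ŵ_α² = 1` and `ŵ_α ŵ_β ŵ_α = ŵ_{w_α(β)}`, for `α, β ∈ R^×`. -/
def conjRels (B : LinearMap.BilinForm ℝ V) (R : Set V) :
    Set (FreeGroup ↥(nonIso B R)) :=
  {r | (∃ a : ↥(nonIso B R), r = FreeGroup.of a * FreeGroup.of a) ∨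
      (∃ a b c : ↥(nonIso B R), (c : V) = reflMap B (a : V) (b : V) ∧
        r = FreeGroup.of a * FreeGroup.of b * FreeGroup.of a * (FreeGroup.of c)⁻¹)}

/-- The conjugation presented group `Ŵ` associated with `R`. -/
abbrev WHat (B : LinearMap.BilinForm ℝ V) (R : Set V) := PresentedGroup (conjRels B R)

/-- The generator `ŵ_α` of `Ŵ`. -/
def wHat (B : LinearMap.BilinForm ℝ V) (R : Set V) (a : ↥(nonIso B R)) : WHat B R :=
  PresentedGroup.of a

/-- `W` has the presentation by conjugation: the canonical epimorphism
`ψ : Ŵ → W`, `ŵ_α ↦ w_α` is an isomorphism. -/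
def HasPresByConj (B : LinearMap.BilinForm ℝ V) (Vdot : Submodule ℝ V)
    (hc : IsCompl (LinearMap.ker B) Vdot) (R : Set V) : Prop :=
  ∃ ψ : WHat B R →* ↥(weylTilde B Vdot hc (nonIso B R)),
    (∀ a : ↥(nonIso B R),
      ((ψ (wHat B R a) : (VT B) ≃ₗ[ℝ] (VT B))) =
        reflEquiv (formT B Vdot hc) ((a : V), 0)) ∧
    Function.Bijective ψ

/-- The restriction of the form to a subspace. -/
def restrictForm (B : LinearMap.BilinForm ℝ V) (U : Submodule ℝ V) :
    LinearMap.BilinForm ℝ ↥U := B.compl₁₂ U.subtype U.subtype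

/-- The root system `R_P = R_P^n ∪ R_P^i` associated with a subset `P ⊆ R^×`,
where `R_P^n = W_P ⬝ P` and `R_P^i = (R_P^n - R_P^n) ∩ R⁰`. -/
def earsOf (B : LinearMap.BilinForm ℝ V) (R P : Set V) : Set V :=
  reflOrbit B P ∪
    ((reflOrbit B P - reflOrbit B P) ∩ (R ∩ (LinearMap.ker B : Set V)))

/-- The subgroup `2⟨R⟩` of `⟨R⟩`. -/
def twoLat (R : Set V) : AddSubgroup V :=
  AddSubgroup.map (AddMonoidHom.mk' (fun x : V => x + x) (fun a b => by abel))
    (AddSubgroup.closure R)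



section SMinimalHelpers

variable (B : LinearMap.BilinForm ℝ V)

private theorem bilin_eq_zero_of_self (hsymm : ∀ x y : V, B x y = B y x)
    (hpsd : ∀ x : V, 0 ≤ B x x) {y : V} (hy : B y y = 0) (x : V) : B x y = 0 := by
  by_contra h
  have key : ∀ t : ℝ, 0 ≤ B x x + 2 * t * B x y := by
    intro t
    have h0 := hpsd (x + t • y)
    have e : B (x + t • y) (x + t • y) = B x x + 2 * t * B x y := by
      simp only [map_add, map_smul, LinearMap.add_apply, LinearMap.smul_apply, smul_eq_mul]
      rw [hy, hsymm y x]; ring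
    rw [e] at h0; exact h0
  have h1 := key (-(B x x + 1) / (2 * B x y))
  have h2 : 2 * (-(B x x + 1) / (2 * B x y)) * B x y = -(B x x + 1) := by
    field_simp
  rw [h2] at h1
  linarith

private theorem bilin_sq_le (hsymm : ∀ x y : V, B x y = B y x)
    (hpsd : ∀ x : V, 0 ≤ B x x) (x y : V) : B x y * B x y ≤ B x x * B y y := by
  rcases eq_or_ne (B y y) 0 with hy | hy
  · rw [bilin_eq_zero_of_self B hsymm hpsd hy x, hy, mul_zero, mul_zero]
  · have hypos : 0 < B y y := lt_of_le_of_ne (hpsd y) (Ne.symm hy)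
    have h0 := hpsd (x - (B x y / B y y) • y)
    have e : B (x - (B x y / B y y) • y) (x - (B x y / B y y) • y)
        = B x x - B x y * B x y / B y y := by
      simp only [map_sub, map_smul, LinearMap.sub_apply, LinearMap.smul_apply, smul_eq_mul]
      rw [hsymm y x]
      field_simp
      ring
    rw [e, sub_nonneg] at h0
    exact (div_le_iff₀ hypos).mp h0

private theorem reflMap_isometry (hsymm : ∀ x y : V, B x y = B y x) (a x y : V) :
    B (reflMap B a x) (reflMap B a y) = B x y := by
  rcases eq_or_ne (B a a) 0 with ha | ha
  · simp [reflMap_apply, ha]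
  · rw [reflMap_apply, reflMap_apply]
    simp only [map_sub, map_smul, LinearMap.sub_apply, LinearMap.smul_apply, smul_eq_mul]
    rw [hsymm a y]
    field_simp
    ring

private theorem reflMap_self {a : V} (ha : B a a ≠ 0) : reflMap B a a = -a := by
  rw [reflMap_apply, div_mul_cancel₀ _ ha, two_smul]
  abel

private theorem reflT_pair (Vdot : Submodule ℝ V) (hc : IsCompl (LinearMap.ker B) Vdot)
    (q v : V) :
    reflEquiv (formT B Vdot hc) (q, 0) (v, (0 : Module.Dual ℝ ↥(LinearMap.ker B)))
      = (reflMap B q v, 0) := by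
  rw [reflEquiv_apply, reflMap_apply, reflMap_apply]
  have h1 : formT B Vdot hc (q, (0 : Module.Dual ℝ ↥(LinearMap.ker B))) (q, 0) = B q q := by
    simp [formT]
  have h2 : formT B Vdot hc (v, (0 : Module.Dual ℝ ↥(LinearMap.ker B))) (q, 0) = B v q := by
    simp [formT]
  rw [h1, h2]
  simp [Prod.smul_mk, Prod.mk_sub_mk]

private theorem weylTilde_restrict (Vdot : Submodule ℝ V)
    (hc : IsCompl (LinearMap.ker B) Vdot) (Q : Set V) {g : VT B ≃ₗ[ℝ] VT B}
    (hg : g ∈ weylTilde B Vdot hc Q) :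
    ∃ h ∈ weylOn B Q, ∀ v : V, g (v, (0 : Module.Dual ℝ ↥(LinearMap.ker B))) = (h v, 0) := by
  induction hg using Subgroup.closure_induction with
  | mem g hg =>
    obtain ⟨q, hq, rfl⟩ := hg
    refine ⟨reflEquiv B q, Subgroup.subset_closure ⟨q, hq, rfl⟩, fun v => ?_⟩
    rw [reflT_pair, reflEquiv_apply]
  | one => exact ⟨1, one_mem _, fun v => rfl⟩
  | mul g₁ g₂ hg₁ hg₂ ih₁ ih₂ =>
    obtain ⟨h₁, hW₁, hv₁⟩ := ih₁
    obtain ⟨h₂, hW₂, hv₂⟩ := ih₂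
    refine ⟨h₁ * h₂, mul_mem hW₁ hW₂, fun v => ?_⟩
    show g₁ (g₂ (v, 0)) = (h₁ (h₂ v), 0)
    rw [hv₂ v, hv₁ (h₂ v)]
  | inv g hg ih =>
    obtain ⟨h, hW, hv⟩ := ih
    refine ⟨h⁻¹, inv_mem hW, fun v => ?_⟩
    have key : g (h⁻¹ v, (0 : Module.Dual ℝ ↥(LinearMap.ker B))) = (v, 0) := by
      rw [hv (h⁻¹ v)]
      show (h (h.symm v), (0 : Module.Dual ℝ ↥(LinearMap.ker B))) = (v, 0)
      rw [h.apply_symm_apply]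
    calc g⁻¹ (v, (0 : Module.Dual ℝ ↥(LinearMap.ker B)))
        = g⁻¹ (g (h⁻¹ v, 0)) := by rw [key]
      _ = (h⁻¹ v, 0) := g.symm_apply_apply _

private theorem weylOn_props (hsymm : ∀ x y : V, B x y = B y x) (R : Set V)
    (hRinv : ∀ a ∈ nonIso B R, ∀ b ∈ R, reflMap B a b ∈ R)
    {Q : Set V} (hQ : Q ⊆ nonIso B R) {h : V ≃ₗ[ℝ] V} (hh : h ∈ weylOn B Q) :
    (∀ x y : V, B (h x) (h y) = B x y) ∧ (∀ v ∈ R, h v ∈ R) ∧ (∀ v ∈ R, h⁻¹ v ∈ R) := by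
  induction hh using Subgroup.closure_induction with
  | mem g hg =>
    obtain ⟨q, hq, rfl⟩ := hg
    have hinv : (reflEquiv B q)⁻¹ = reflEquiv B q := rfl
    exact ⟨fun x y => reflMap_isometry B hsymm q x y,
      fun v hv => hRinv q (hQ hq) v hv,
      fun v hv => by rw [hinv]; exact hRinv q (hQ hq) v hv⟩
  | one => exact ⟨fun x y => rfl, fun v hv => hv, fun v hv => hv⟩
  | mul g₁ g₂ hg₁ hg₂ ih₁ ih₂ =>
    obtain ⟨hiso₁, hmem₁, hmem₁'⟩ := ih₁
    obtain ⟨hiso₂, hmem₂, hmem₂'⟩ := ih₂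
    refine ⟨fun x y => ?_, fun v hv => hmem₁ _ (hmem₂ v hv), fun v hv => ?_⟩
    · show B (g₁ (g₂ x)) (g₁ (g₂ y)) = B x y
      rw [hiso₁, hiso₂]
    · show (g₁ * g₂)⁻¹ v ∈ R
      rw [mul_inv_rev]
      exact hmem₂' _ (hmem₁' v hv)
  | inv g hg ih =>
    obtain ⟨hiso, hmem, hmem'⟩ := ih
    refine ⟨fun x y => ?_, hmem', fun v hv => by rw [inv_inv]; exact hmem v hv⟩
    have := hiso (g⁻¹ x) (g⁻¹ y)
    have e1 : g (g⁻¹ x) = x := g.apply_symm_apply x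
    have e2 : g (g⁻¹ y) = y := g.apply_symm_apply y
    rw [e1, e2] at this
    rw [this]

end SMinimalHelpers

/-- For a reduced simply laced extended affine root system of
rank `> 1`, every reflectable base is S-minimal. -/
theorem simplyLaced_reflBase_sMinimal
    {V : Type*} [AddCommGroup V] [Module ℝ V] [FiniteDimensional ℝ V]
    (B : LinearMap.BilinForm ℝ V) (R : Set V) (hR : IsEARS B R) (hred : IsReduced B R)
    (hsl : IsSimplyLaced B R) (hrank : 1 < rank B)
    (Vdot : Submodule ℝ V) (hc : IsCompl (LinearMap.ker B) Vdot)
    (P : Set V) (hP : IsReflBase B R P) :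
    ∀ Q ⊆ P, Q ≠ P → weylTilde B Vdot hc Q ≠ weylTilde B Vdot hc (nonIso B R) := by
  intro Q hQP hQne hEq
  obtain ⟨hRS, hmin⟩ := hP
  have hsymm := hR.symm
  have hpsd := hR.posSemidef
  have hQsub : Q ⊆ nonIso B R := fun x hx => hRS.1 (hQP hx)
  have hOne : reflOrbit B Q ≠ nonIso B R := fun h => hmin Q hQP hQne ⟨hQsub, h⟩
  -- kernel criterion
  have hker : ∀ {r : V}, B r r = 0 → r ∈ LinearMap.ker B := by
    intro r hr
    rw [LinearMap.mem_ker]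
    ext u
    rw [LinearMap.zero_apply, hsymm r u]
    exact bilin_eq_zero_of_self B hsymm hpsd hr u
  have hkerB : ∀ {σ : V}, σ ∈ LinearMap.ker B → ∀ x : V, B σ x = 0 := by
    intro σ hσ x
    rw [LinearMap.mem_ker] at hσ
    rw [hσ, LinearMap.zero_apply]
  -- span of R is everything
  have hspan : Submodule.span ℝ R = ⊤ := by
    obtain ⟨s, -, hsp, hcl⟩ := hR.lattice
    have hle : AddSubgroup.closure R ≤ (Submodule.span ℝ R).toAddSubgroup :=
      (AddSubgroup.closure_le _).mpr fun r hr => Submodule.subset_span hr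
    have hs_sub : s ⊆ (Submodule.span ℝ R : Set V) := fun x hx =>
      hle (hcl ▸ AddSubgroup.subset_closure hx)
    exact top_unique (hsp ▸ Submodule.span_le.mpr hs_sub)
  -- every reflection of R^× lies in the Weyl group of Q, acting on V
  have hrefl : ∀ β ∈ nonIso B R, reflEquiv B β ∈ weylOn B Q := by
    intro β hβ
    have hmem : reflEquiv (formT B Vdot hc) (β, 0) ∈ weylTilde B Vdot hc Q := by
      rw [hEq]; exact reflT_mem_weylTilde B Vdot hc hβ
    obtain ⟨h, hhW, hhv⟩ := weylTilde_restrict B Vdot hc Q hmem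
    have heq : reflEquiv B β = h := by
      apply LinearEquiv.ext
      intro v
      have h1 := hhv v
      rw [reflT_pair B Vdot hc β v] at h1
      have h2 := congrArg Prod.fst h1
      simpa using h2
    rw [heq]; exact hhW
  set O := reflOrbit B Q with hO
  have hOsub : O ⊆ nonIso B R := by
    rintro x ⟨w, hw, a, ha, rfl⟩
    obtain ⟨hiso, hmemR, -⟩ := weylOn_props B hsymm R hR.reflInvariant hQsub hw
    exact ⟨hmemR a (hQsub ha).1, by rw [hiso a a]; exact (hQsub ha).2⟩
  have hOinv : ∀ w ∈ weylOn B Q, ∀ x ∈ O, w x ∈ O := by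
    rintro w hw x ⟨w', hw', a, ha, rfl⟩
    exact ⟨w * w', mul_mem hw hw', a, ha, rfl⟩
  have hOinv' : ∀ w ∈ weylOn B Q, ∀ x, x ∉ O → w x ∉ O := by
    intro w hw x hxO hmem
    have h2 := hOinv w⁻¹ (inv_mem hw) _ hmem
    rw [show w⁻¹ (w x) = x from w.symm_apply_apply x] at h2
    exact hxO h2
  have hOneg : ∀ x ∈ O, -x ∈ O := by
    rintro x ⟨w, hw, a, ha, rfl⟩
    refine ⟨w * reflEquiv B a, mul_mem hw (Subgroup.subset_closure ⟨a, ha, rfl⟩), a, ha, ?_⟩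
    show w (reflEquiv B a a) = -(w a)
    rw [reflEquiv_apply, reflMap_self B (hQsub ha).2, map_neg]
  -- the complement of O in R^× is nonempty
  have hss : O ⊂ nonIso B R := Set.ssubset_iff_subset_ne.mpr ⟨hOsub, hOne⟩
  obtain ⟨γ₀, hγ₀R, hγ₀O⟩ := Set.exists_of_ssubset hss
  -- O is nonempty
  have hQnonempty : Q.Nonempty := by
    rcases Set.eq_empty_or_nonempty Q with rfl | h
    · exfalso
      have h1 := hrefl γ₀ hγ₀R
      have h2 : weylOn B (∅ : Set V) = ⊥ := by
        rw [weylOn, Set.image_empty, Subgroup.closure_empty]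
      rw [h2, Subgroup.mem_bot] at h1
      have h3 : reflEquiv B γ₀ γ₀ = γ₀ := by rw [h1]; rfl
      rw [reflEquiv_apply, reflMap_self B hγ₀R.2] at h3
      have h4 : γ₀ + γ₀ = 0 := by nth_rewrite 1 [← h3]; exact neg_add_cancel γ₀
      have h5 : (2 : ℝ) • γ₀ = 0 := by rw [two_smul]; exact h4
      have h6 : γ₀ = 0 := by
        rcases smul_eq_zero.mp h5 with h | h
        · norm_num at h
        · exact h
      exact hγ₀R.2 (by rw [h6]; simp)
    · exact h
  obtain ⟨q0, hq0⟩ := hQnonempty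
  have hq0O : q0 ∈ O := ⟨1, one_mem _, q0, hq0, rfl⟩
  -- connectivity helper
  have hconnX : ∀ X : Set V, X.Nonempty → (nonIso B R \ X).Nonempty →
      X ⊆ nonIso B R → ∃ a ∈ X, ∃ b ∈ nonIso B R \ X, B a b ≠ 0 := by
    intro X h1 h2 h3
    by_contra hcon
    push_neg at hcon
    exact hR.conn ⟨X, nonIso B R \ X, h1, h2, Set.union_diff_cancel h3,
      Set.inter_diff_self X (nonIso B R), hcon⟩
  -- the main contradiction machine
  have main : ∀ β ∈ O, ∀ γ, γ ∈ nonIso B R → γ ∉ O → B β γ ≠ 0 →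
      γ - β ∉ LinearMap.ker B → γ + β ∉ LinearMap.ker B → False := by
    intro β hβ γ hγR hγO hBβγ hminus hplus
    have hβR := hOsub hβ
    obtain ⟨n, hn⟩ := hR.integrality β hβR γ hγR
    have hk : B β β ≠ 0 := hβR.2
    have hkpos : 0 < B β β := lt_of_le_of_ne (hpsd β) (Ne.symm hk)
    have hsl' : B γ γ = B β β := hsl γ hγR β hβR
    have hγβ : B γ β ≠ 0 := fun h0 => hBβγ (by rw [hsymm β γ, h0])
    have hn' : 2 * B γ β = (n : ℝ) * B β β := (div_eq_iff hk).mp hn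
    have hn0 : n ≠ 0 := by
      rintro rfl
      rw [Int.cast_zero, zero_mul] at hn'
      exact hγβ (by linarith)
    have hcs : B γ β * B γ β ≤ B β β * B β β := by
      have h1 := bilin_sq_le B hsymm hpsd γ β
      rwa [hsl'] at h1
    have hnsq : n * n ≤ 4 := by
      have e4 : ((n : ℝ) * B β β) * ((n : ℝ) * B β β) = (2 * B γ β) * (2 * B γ β) := by
        rw [← hn']
      have h6 : (n : ℝ) * n ≤ 4 := by nlinarith [hcs, e4, mul_pos hkpos hkpos]
      exact_mod_cast h6
    have hn2 : n ≠ 2 := by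
      rintro rfl
      push_cast at hn'
      have hb : B γ β = B β β := by linarith
      apply hminus
      apply hker
      have e : B (γ - β) (γ - β) = B γ γ - B γ β - B β γ + B β β := by
        simp only [map_sub, LinearMap.sub_apply]; ring
      rw [e, hsl', hsymm β γ, hb]; ring
    have hn2' : n ≠ -2 := by
      rintro rfl
      push_cast at hn'
      have hb : B γ β = -B β β := by linarith
      apply hplus
      apply hker
      have e : B (γ + β) (γ + β) = B γ γ + B γ β + B β γ + B β β := by
        simp only [map_add, LinearMap.add_apply]; ring
      rw [e, hsl', hsymm β γ, hb]; ring
    have hn1 : n = 1 ∨ n = -1 := by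
      have h5 : -2 ≤ n ∧ n ≤ 2 := by constructor <;> nlinarith [hnsq]
      omega
    have hsc : 2 / B β β * B γ β = (n : ℝ) := by rw [← hn]; ring
    have hsc2 : 2 / B γ γ * B β γ = (n : ℝ) := by rw [hsl', hsymm β γ, ← hn]; ring
    have hwβγ : reflMap B β γ = γ - (n : ℝ) • β := by rw [reflMap_apply, hsc]
    have hwγβ : reflMap B γ β = β - (n : ℝ) • γ := by rw [reflMap_apply, hsc2]
    have hmem1 : γ - (n : ℝ) • β ∉ O := by
      have h7 := hOinv' (reflEquiv B β) (hrefl β hβR) γ hγO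
      rwa [reflEquiv_apply, hwβγ] at h7
    have hmem2 : β - (n : ℝ) • γ ∈ O := by
      have h7 := hOinv (reflEquiv B γ) (hrefl γ hγR) β hβ
      rwa [reflEquiv_apply, hwγβ] at h7
    rcases hn1 with rfl | rfl
    · simp only [Int.cast_one, one_smul] at hmem1 hmem2
      have h6 := hOneg _ hmem2
      rw [neg_sub] at h6
      exact hmem1 h6
    · simp only [Int.cast_neg, Int.cast_one, neg_smul, one_smul, sub_neg_eq_add] at hmem1 hmem2
      rw [add_comm] at hmem2
      exact hmem1 hmem2
  -- a connected pair between O and its complement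
  obtain ⟨β₀, hβ₀O, γ₁, hγ₁, hB01⟩ := hconnX O ⟨q0, hq0O⟩ ⟨γ₀, hγ₀R, hγ₀O⟩ hOsub
  have hβ₀R := hOsub hβ₀O
  rcases Classical.em (γ₁ - β₀ ∈ LinearMap.ker B ∨ γ₁ + β₀ ∈ LinearMap.ker B) with hbad | hgood
  swap
  · push_neg at hgood
    exact main β₀ hβ₀O γ₁ hγ₁.1 hγ₁.2 hB01 hgood.1 hgood.2
  obtain ⟨ε, hε1, hεker⟩ : ∃ ε : ℝ, (ε = 1 ∨ ε = -1) ∧ γ₁ - ε • β₀ ∈ LinearMap.ker B := by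
    rcases hbad with h | h
    · exact ⟨1, Or.inl rfl, by rwa [one_smul]⟩
    · exact ⟨-1, Or.inr rfl, by rwa [neg_smul, one_smul, sub_neg_eq_add]⟩
  have hεne : ε ≠ 0 := by rcases hε1 with rfl | rfl <;> norm_num
  set C : Set V :=
    {δ | δ ∈ nonIso B R ∧ (δ - β₀ ∈ LinearMap.ker B ∨ δ + β₀ ∈ LinearMap.ker B)} with hCdef
  have hCsub : C ⊆ nonIso B R := fun δ hδ => hδ.1
  have hCβ₀ : β₀ ∈ C := ⟨hβ₀R, Or.inl (by rw [sub_self]; exact zero_mem _)⟩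
  have hCc : (nonIso B R \ C).Nonempty := by
    by_contra hcon
    rw [Set.not_nonempty_iff_eq_empty, Set.diff_eq_empty] at hcon
    have hβ₀ne : β₀ ≠ 0 := fun h0 => hβ₀R.2 (by rw [h0]; simp)
    have hle : (⊤ : Submodule ℝ V) ≤ (ℝ ∙ β₀) ⊔ LinearMap.ker B := by
      rw [← hspan, Submodule.span_le]
      intro r hr
      by_cases hrr : B r r = 0
      · exact Submodule.mem_sup_right (hker hrr)
      · rcases (hcon ⟨hr, hrr⟩).2 with h1 | h1
        · have e : r = (r - β₀) + β₀ := by abel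
          rw [e]
          exact add_mem (Submodule.mem_sup_right h1)
            (Submodule.mem_sup_left (Submodule.mem_span_singleton_self β₀))
        · have e : r = (r + β₀) - β₀ := by abel
          rw [e]
          exact sub_mem (Submodule.mem_sup_right h1)
            (Submodule.mem_sup_left (Submodule.mem_span_singleton_self β₀))
    have htop : (ℝ ∙ β₀) ⊔ LinearMap.ker B = ⊤ := top_unique hle
    have h1 : Module.finrank ℝ V = Module.finrank ℝ ↥((ℝ ∙ β₀) ⊔ LinearMap.ker B) := by
      rw [htop]
      exact (finrank_top ℝ V).symm
    have h2 : Module.finrank ℝ ↥((ℝ ∙ β₀) ⊔ LinearMap.ker B)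
        ≤ Module.finrank ℝ ↥(ℝ ∙ β₀) + Module.finrank ℝ ↥(LinearMap.ker B) :=
      Submodule.finrank_add_le_finrank_add_finrank _ _
    rw [finrank_span_singleton hβ₀ne] at h2
    have h3 : rank B ≤ 1 := by
      unfold rank nullity
      omega
    omega
  obtain ⟨c, hcC, d, hd, hBcd⟩ := hconnX C ⟨β₀, hCβ₀⟩ hCc hCsub
  have hBβ₀d : B β₀ d ≠ 0 := by
    rcases hcC.2 with h1 | h1
    · intro h0
      apply hBcd
      have e : c = (c - β₀) + β₀ := by abel
      rw [e, map_add, LinearMap.add_apply, hkerB h1 d, h0, add_zero]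
    · intro h0
      apply hBcd
      have e : c = (c + β₀) - β₀ := by abel
      rw [e, map_sub, LinearMap.sub_apply, hkerB h1 d, h0, sub_zero]
  have hdm : d - β₀ ∉ LinearMap.ker B := fun h => hd.2 ⟨hd.1, Or.inl h⟩
  have hdp : d + β₀ ∉ LinearMap.ker B := fun h => hd.2 ⟨hd.1, Or.inr h⟩
  by_cases hdO : d ∈ O
  · -- use the pair (d, γ₁)
    have hBdγ₁ : B d γ₁ ≠ 0 := by
      intro h0
      apply hBβ₀d
      have e1 : B d (γ₁ - ε • β₀) = 0 := by rw [hsymm]; exact hkerB hεker d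
      have e2 : B d γ₁ = B d (γ₁ - ε • β₀) + ε * B d β₀ := by
        rw [map_sub, map_smul, smul_eq_mul]; ring
      rw [h0, e1, zero_add] at e2
      have e3 : B d β₀ = 0 := by
        rcases mul_eq_zero.mp e2.symm with h | h
        · exact absurd h hεne
        · exact h
      rw [hsymm β₀ d]
      exact e3
    have hγ₁dm : γ₁ - d ∉ LinearMap.ker B := by
      intro h
      apply hd.2
      refine ⟨hd.1, ?_⟩
      rcases hε1 with rfl | rfl
      · left
        have e : d - β₀ = (γ₁ - (1 : ℝ) • β₀) - (γ₁ - d) := by module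
        rw [e]; exact sub_mem hεker h
      · right
        have e : d + β₀ = (γ₁ - (-1 : ℝ) • β₀) - (γ₁ - d) := by module
        rw [e]; exact sub_mem hεker h
    have hγ₁dp : γ₁ + d ∉ LinearMap.ker B := by
      intro h
      apply hd.2
      refine ⟨hd.1, ?_⟩
      rcases hε1 with rfl | rfl
      · right
        have e : d + β₀ = (γ₁ + d) - (γ₁ - (1 : ℝ) • β₀) := by module
        rw [e]; exact sub_mem h hεker
      · left
        have e : d - β₀ = (γ₁ + d) - (γ₁ - (-1 : ℝ) • β₀) := by module
        rw [e]; exact sub_mem h hεker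
    exact main d hdO γ₁ hγ₁.1 hγ₁.2 hBdγ₁ hγ₁dm hγ₁dp
  · exact main β₀ hβ₀O d hd.1 hdO hBβ₀d hdm hdp

end EARSPaper
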